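/- Suppose the Markov kernel P has unique invariant probability measure Π and satisfies the drift condition (PV)(x) - V(x) ≤ -(1-γ) f(x) + K with V, f ≥ 1. Set C = {x : f(x) ≤ R} for R > K/(1-γ) and suppose ∫_C V dΠ < ∞. Then for every measurable φ with |φ| ≤ f, the function φ is Π-integrable and ∫_C E[Σ_{k=1}^{τ_C} φ(X_k) | X_0 = x] Π(dx) = ∫_X φ dΠ. -/

import Mathlib

/-!
Write `Q g = 1_{Cᶜ} · P g` for the chain killed on entering `C`, so that
`P (Qᵏ g) x = E_x[g(X_{k+1}); τ_C > k]`. Invariance of `π` splits `∫ g dπ` as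
`∑_{k<n} ∫_C P (Qᵏ g) dπ + ∫ Qⁿ g dπ`, and everything rests on the remainder vanishing.
Off `C` the drift condition reads `PV + ((1-γ)R - K) ≤ V`, whence `n ((1-γ)R - K) Qⁿ 1 ≤ V`:
the chain enters `C` almost surely from every starting point, and `∫ Qⁿ 1 dπ → 0`. Since `Q` is
a contraction in `L¹(π)`, the bound `Qⁿ g ≤ M Qⁿ 1 + Qⁿ (g 1_{g > M})` carries this over to every
`π`-integrable `g`; and `f` is `π`-integrable because integrating the drift condition against `π`,
with `V` truncated at level `M`, gives `(1-γ) ∫ f dπ ≤ K`.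
-/

open MeasureTheory ProbabilityTheory Filter Topology
open scoped ENNReal

section

section Integrals

variable {Ω : Type*} [MeasurableSpace Ω] {μ : Measure Ω}

theorem tendsto_lintegral_indicator_lt {g : Ω → ℝ≥0∞} (hg : Measurable g)
    (hg_fin : ∫⁻ y, g y ∂μ ≠ ∞) :
    Tendsto (fun M : ℕ => ∫⁻ y, {y | (M : ℝ≥0∞) < g y}.indicator g y ∂μ) atTop (𝓝 0) := by
  have h_pointwise : ∀ᵐ y ∂μ, Tendsto (fun M : ℕ => {y | (M : ℝ≥0∞) < g y}.indicator g y)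
      atTop (𝓝 0) := by
    filter_upwards [ae_lt_top hg hg_fin] with y hy
    obtain ⟨M, hM⟩ := ENNReal.exists_nat_gt hy.ne
    refine tendsto_const_nhds.congr' (eventually_atTop.2 ⟨M, fun N hN => ?_⟩)
    have hgN : g y ≤ N := hM.le.trans (by exact_mod_cast hN)
    exact (Set.indicator_of_notMem (s := {y | (N : ℝ≥0∞) < g y}) hgN.not_gt g).symm
  simpa using tendsto_lintegral_of_dominated_convergence (f := fun _ => 0) g
    (fun _ => hg.indicator (measurableSet_lt measurable_const hg))
    (fun _ => ae_of_all _ (Set.indicator_le_self _ _)) hg_fin h_pointwise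

theorem lintegral_comp_indicator {E : Type*} [Zero E] {s : Set Ω} (hs : MeasurableSet s)
    {G : E → ℝ≥0∞} (hG : G 0 = 0) (F : Ω → E) :
    ∫⁻ ω, G (s.indicator F ω) ∂μ = ∫⁻ ω in s, G (F ω) ∂μ := by
  rw [← lintegral_indicator hs]
  exact lintegral_congr fun ω => congrFun (Set.indicator_comp_of_zero hG).symm ω

theorem integral_tsum_eq_toReal_sub_toReal {a : ℕ → Ω → ℝ}
    (ha : ∀ k, AEStronglyMeasurable (a k) μ) (h_fin : ∑' k, ∫⁻ ω, ‖a k ω‖ₑ ∂μ ≠ ∞) :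
    ∫ ω, ∑' k, a k ω ∂μ = (∑' k, ∫⁻ ω, ENNReal.ofReal (a k ω) ∂μ).toReal
      - (∑' k, ∫⁻ ω, ENNReal.ofReal (-a k ω) ∂μ).toReal := by
  have h_le {b : ℝ → ℝ} (hb : ∀ r, b r ≤ |r|) :
      ∑' k, ∫⁻ ω, ENNReal.ofReal (b (a k ω)) ∂μ ≠ ∞ := by
    refine ne_top_of_le_ne_top h_fin (ENNReal.tsum_le_tsum fun k => lintegral_mono fun ω => ?_)
    rw [Real.enorm_eq_ofReal_abs]
    exact ENNReal.ofReal_le_ofReal (hb _)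
  have h_pos : ∑' k, ∫⁻ ω, ENNReal.ofReal (a k ω) ∂μ ≠ ∞ := h_le (b := id) le_abs_self
  have h_neg : ∑' k, ∫⁻ ω, ENNReal.ofReal (-a k ω) ∂μ ≠ ∞ := h_le (b := Neg.neg) neg_le_abs
  have h_int (k : ℕ) : Integrable (a k) μ := ⟨ha k, (ENNReal.le_tsum k).trans_lt h_fin.lt_top⟩
  rw [integral_tsum ha h_fin,
    ENNReal.tsum_toReal_eq fun k => ne_top_of_le_ne_top h_pos (ENNReal.le_tsum k),
    ENNReal.tsum_toReal_eq fun k => ne_top_of_le_ne_top h_neg (ENNReal.le_tsum k),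
    ← (ENNReal.summable_toReal h_pos).tsum_sub (ENNReal.summable_toReal h_neg)]
  exact tsum_congr fun k => integral_eq_lintegral_pos_part_sub_lintegral_neg_part (h_int k)

theorem integral_eq_toReal_sub_toReal_of_ae_eq {F : Ω → ℝ} {Fp Fm : Ω → ℝ≥0∞}
    (hp : AEMeasurable Fp μ) (hm : AEMeasurable Fm μ) (hp_fin : ∫⁻ ω, Fp ω ∂μ ≠ ∞)
    (hm_fin : ∫⁻ ω, Fm ω ∂μ ≠ ∞) (hF : F =ᵐ[μ] fun ω => (Fp ω).toReal - (Fm ω).toReal) :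
    ∫ ω, F ω ∂μ = (∫⁻ ω, Fp ω ∂μ).toReal - (∫⁻ ω, Fm ω ∂μ).toReal := by
  rw [integral_congr_ae hF, integral_sub (integrable_toReal_of_lintegral_ne_top hp hp_fin)
    (integrable_toReal_of_lintegral_ne_top hm hm_fin), integral_toReal hp (ae_lt_top' hp hp_fin),
    integral_toReal hm (ae_lt_top' hm hm_fin)]

theorem lintegral_ofReal_add_ofReal_le {V : Ω → ℝ} (hV0 : ∀ ω, 0 ≤ V ω) (hV : Integrable V μ)
    {a b : ℝ} (ha : 0 ≤ a) (hab : ∫ ω, V ω ∂μ + a ≤ b) :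
    ∫⁻ ω, ENNReal.ofReal (V ω) ∂μ + ENNReal.ofReal a ≤ ENNReal.ofReal b := by
  rw [← ofReal_integral_eq_lintegral_ofReal hV (ae_of_all _ hV0),
    ← ENNReal.ofReal_add (integral_nonneg hV0) ha]
  exact ENNReal.ofReal_le_ofReal hab

end Integrals

variable {𝓧 : Type*}

/-- The paths with `1 ≤ k ≤ τ_C`, where `τ_C ω = inf {t ≥ 1 | ω t ∈ C}`. -/
def notHitBefore (C : Set 𝓧) (k : ℕ) : Set (ℕ → 𝓧) :=
  {ω | 1 ≤ k ∧ ∀ j, 1 ≤ j → j < k → ω j ∉ C}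

section PathSpace

variable {C : Set 𝓧}

theorem notHitBefore_zero : notHitBefore C 0 = ∅ := by
  simp [notHitBefore]

theorem notHitBefore_one : notHitBefore C 1 = Set.univ := by
  ext ω
  simp only [notHitBefore, Set.mem_ofPred_eq, Set.mem_univ, iff_true]
  exact ⟨le_rfl, fun j h1 h2 => absurd h2 (by omega)⟩

theorem notHitBefore_add_two (k : ℕ) :
    notHitBefore C (k + 2) = notHitBefore C (k + 1) ∩ (fun ω => ω (k + 1)) ⁻¹' Cᶜ := by
  ext ω
  simp only [notHitBefore, Set.mem_ofPred_eq, Set.mem_inter_iff, Set.mem_preimage,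
    Set.mem_compl_iff]
  constructor
  · rintro ⟨-, h⟩
    exact ⟨⟨by omega, fun j h1 h2 => h j h1 (by omega)⟩, h (k + 1) (by omega) (by omega)⟩
  · rintro ⟨⟨-, h⟩, hk⟩
    refine ⟨by omega, fun j h1 h2 => ?_⟩
    rcases Nat.lt_succ_iff_lt_or_eq.1 h2 with h2 | rfl
    exacts [h j h1 h2, hk]

end PathSpace

variable [MeasurableSpace 𝓧]

noncomputable def killedOp (P : Kernel 𝓧 𝓧) (C : Set 𝓧) (g : 𝓧 → ℝ≥0∞) : 𝓧 → ℝ≥0∞ :=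
  Cᶜ.indicator fun x => ∫⁻ y, g y ∂P x

/-- `excursionSum P C g x = E_x[∑_{k=1}^{τ_C} g(X_k)]`, the `k`-th term being the contribution of
`X_{k+1}` on `{τ_C > k}`. -/
noncomputable def excursionSum (P : Kernel 𝓧 𝓧) (C : Set 𝓧) (g : 𝓧 → ℝ≥0∞) (x : 𝓧) : ℝ≥0∞ :=
  ∑' k, ∫⁻ y, (killedOp P C)^[k] g y ∂P x

namespace killedOp

variable {P : Kernel 𝓧 𝓧} {C : Set 𝓧} {g g₁ g₂ : 𝓧 → ℝ≥0∞}

theorem measurable (hC : MeasurableSet C) (hg : Measurable g) : Measurable (killedOp P C g) :=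
  hg.lintegral_kernel.indicator hC.compl

theorem measurable_iterate (hC : MeasurableSet C) (hg : Measurable g) (n : ℕ) :
    Measurable ((killedOp P C)^[n] g) := by
  induction n with
  | zero => exact hg
  | succ n ih => rw [Function.iterate_succ_apply']; exact measurable hC ih

theorem mono : Monotone (killedOp P C) := fun _ _ h _ =>
  Set.indicator_le_indicator (lintegral_mono h)

theorem add (hg₁ : Measurable g₁) :
    killedOp P C (g₁ + g₂) = killedOp P C g₁ + killedOp P C g₂ := by
  simp only [killedOp, Pi.add_apply, lintegral_add_left hg₁]
  exact Set.indicator_add' _ _ _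

theorem const_mul (c : ℝ≥0∞) (hg : Measurable g) :
    killedOp P C (fun x => c * g x) = fun x => c * killedOp P C g x := by
  simp only [killedOp, lintegral_const_mul c hg]
  exact funext fun x => Set.indicator_mul_right _ _ _

theorem iterate_add (hC : MeasurableSet C) (hg₁ : Measurable g₁) (n : ℕ) :
    (killedOp P C)^[n] (g₁ + g₂) = (killedOp P C)^[n] g₁ + (killedOp P C)^[n] g₂ := by
  induction n with
  | zero => rfl
  | succ n ih => simp only [Function.iterate_succ_apply', ih, add (measurable_iterate hC hg₁ n)]

theorem iterate_const_mul (hC : MeasurableSet C) (c : ℝ≥0∞) (hg : Measurable g) (n : ℕ) :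
    (killedOp P C)^[n] (fun x => c * g x) = fun x => c * (killedOp P C)^[n] g x := by
  induction n with
  | zero => rfl
  | succ n ih =>
    simp only [Function.iterate_succ_apply', ih, const_mul c (measurable_iterate hC hg n)]

theorem le_one [IsMarkovKernel P] (hg : g ≤ 1) : killedOp P C g ≤ 1 := fun x =>
  (Set.indicator_le_self _ _ x).trans <| (lintegral_mono hg).trans_eq (by simp)

theorem iterate_one_le_one [IsMarkovKernel P] (n : ℕ) : (killedOp P C)^[n] 1 ≤ 1 := by
  induction n with
  | zero => exact le_rfl
  | succ n ih => rw [Function.iterate_succ_apply']; exact le_one ih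

end killedOp

theorem measurable_excursionSum {P : Kernel 𝓧 𝓧} {C : Set 𝓧} {g : 𝓧 → ℝ≥0∞}
    (hC : MeasurableSet C) (hg : Measurable g) : Measurable (excursionSum P C g) :=
  .tsum fun k => (killedOp.measurable_iterate hC hg k).lintegral_kernel

section Invariant

variable {P : Kernel 𝓧 𝓧} {C : Set 𝓧} {π : Measure 𝓧} {g : 𝓧 → ℝ≥0∞}

theorem lintegral_lintegral_kernel_of_bind_eq (hinv : π.bind (fun x => P x) = π)
    (hg : Measurable g) : ∫⁻ x, ∫⁻ y, g y ∂P x ∂π = ∫⁻ y, g y ∂π := by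
  conv_rhs => rw [← hinv]
  exact (Measure.lintegral_bind P.measurable.aemeasurable hg.aemeasurable).symm

theorem lintegral_killedOp_add (hinv : π.bind (fun x => P x) = π) (hC : MeasurableSet C)
    (hg : Measurable g) :
    ∫⁻ x in C, ∫⁻ y, g y ∂P x ∂π + ∫⁻ x, killedOp P C g x ∂π = ∫⁻ y, g y ∂π := by
  rw [killedOp, lintegral_indicator hC.compl, lintegral_add_compl _ hC,
    lintegral_lintegral_kernel_of_bind_eq hinv hg]

theorem lintegral_killedOp_iterate_le (hinv : π.bind (fun x => P x) = π) (hC : MeasurableSet C)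
    (hg : Measurable g) (n : ℕ) : ∫⁻ x, (killedOp P C)^[n] g x ∂π ≤ ∫⁻ y, g y ∂π := by
  induction n with
  | zero => exact le_rfl
  | succ n ih =>
    rw [Function.iterate_succ_apply', ← lintegral_killedOp_add hinv hC
      (killedOp.measurable_iterate hC hg n)] at *
    exact le_add_self.trans ih

theorem lintegral_eq_sum_add_lintegral_killedOp_iterate (hinv : π.bind (fun x => P x) = π)
    (hC : MeasurableSet C) (hg : Measurable g) (n : ℕ) :
    ∫⁻ y, g y ∂π = ∑ k ∈ Finset.range n, ∫⁻ x in C, ∫⁻ y, (killedOp P C)^[k] g y ∂P x ∂π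
      + ∫⁻ x, (killedOp P C)^[n] g x ∂π := by
  induction n with
  | zero => simp
  | succ n ih =>
    rw [ih, Finset.sum_range_succ, add_assoc, Function.iterate_succ_apply',
      lintegral_killedOp_add hinv hC (killedOp.measurable_iterate hC hg n)]

theorem lintegral_killedOp_iterate_le_mul_add (hinv : π.bind (fun x => P x) = π)
    (hC : MeasurableSet C) (hg : Measurable g) (M : ℝ≥0∞) (n : ℕ) :
    ∫⁻ x, (killedOp P C)^[n] g x ∂π
      ≤ M * ∫⁻ x, (killedOp P C)^[n] 1 x ∂π + ∫⁻ y, {y | M < g y}.indicator g y ∂π := by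
  set tail := {y | M < g y}.indicator g
  have h_tail : Measurable tail := hg.indicator (measurableSet_lt measurable_const hg)
  have hg_le : g ≤ (fun y => M * (1 : 𝓧 → ℝ≥0∞) y) + tail := fun y => by
    by_cases hy : M < g y
    · simp [tail, Set.indicator_of_mem (show y ∈ {y | M < g y} from hy)]
    · exact (not_lt.1 hy).trans (by simp)
  have h_iter : (killedOp P C)^[n] ((fun y => M * (1 : 𝓧 → ℝ≥0∞) y) + tail)
      = fun x => M * (killedOp P C)^[n] 1 x + (killedOp P C)^[n] tail x := by
    rw [killedOp.iterate_add hC (measurable_one.const_mul _),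
      killedOp.iterate_const_mul hC _ measurable_one]
    rfl
  have h_one := killedOp.measurable_iterate (P := P) hC measurable_one n
  calc ∫⁻ x, (killedOp P C)^[n] g x ∂π
      ≤ ∫⁻ x, (M * (killedOp P C)^[n] 1 x + (killedOp P C)^[n] tail x) ∂π :=
        lintegral_mono fun x => (killedOp.mono.iterate n hg_le x).trans_eq (congrFun h_iter x)
    _ ≤ M * ∫⁻ x, (killedOp P C)^[n] 1 x ∂π + ∫⁻ y, tail y ∂π := by
        rw [lintegral_add_left (h_one.const_mul _), lintegral_const_mul _ h_one]
        exact add_le_add le_rfl (lintegral_killedOp_iterate_le hinv hC h_tail n)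

theorem tendsto_lintegral_killedOp_iterate (hinv : π.bind (fun x => P x) = π)
    (hC : MeasurableSet C) (hg : Measurable g) (hg_fin : ∫⁻ y, g y ∂π ≠ ∞)
    (h_one : Tendsto (fun n => ∫⁻ x, (killedOp P C)^[n] 1 x ∂π) atTop (𝓝 0)) :
    Tendsto (fun n => ∫⁻ x, (killedOp P C)^[n] g x ∂π) atTop (𝓝 0) := by
  rw [ENNReal.tendsto_atTop_zero]
  intro ε hε
  obtain ⟨M, hM⟩ := ENNReal.tendsto_atTop_zero.1 (tendsto_lintegral_indicator_lt hg hg_fin)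
    (ε / 2) (ENNReal.half_pos hε.ne')
  obtain ⟨N, hN⟩ := ENNReal.tendsto_atTop_zero.1 h_one (ε / 2 / M)
    (ENNReal.div_pos (ENNReal.half_pos hε.ne').ne' (ENNReal.natCast_ne_top M))
  refine ⟨N, fun n hn => (lintegral_killedOp_iterate_le_mul_add hinv hC hg M n).trans ?_⟩
  calc (M : ℝ≥0∞) * ∫⁻ x, (killedOp P C)^[n] 1 x ∂π + ∫⁻ y, {y | ↑M < g y}.indicator g y ∂π
      ≤ M * (ε / 2 / M) + ε / 2 := by gcongr; exacts [hN n hn, hM M le_rfl]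
    _ ≤ ε / 2 + ε / 2 := by gcongr; exact ENNReal.mul_div_le
    _ = ε := ENNReal.add_halves ε

theorem setLIntegral_excursionSum (hinv : π.bind (fun x => P x) = π)
    (hC : MeasurableSet C) (hg : Measurable g) (hg_fin : ∫⁻ y, g y ∂π ≠ ∞)
    (h_one : Tendsto (fun n => ∫⁻ x, (killedOp P C)^[n] 1 x ∂π) atTop (𝓝 0)) :
    ∫⁻ x in C, excursionSum P C g x ∂π = ∫⁻ y, g y ∂π := by
  simp only [excursionSum]
  rw [lintegral_tsum fun k =>
    (killedOp.measurable_iterate hC hg k).lintegral_kernel.aemeasurable.restrict]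
  have h_lim := (ENNReal.tendsto_nat_tsum fun k =>
    ∫⁻ x in C, ∫⁻ y, (killedOp P C)^[k] g y ∂P x ∂π).add
    (tendsto_lintegral_killedOp_iterate hinv hC hg hg_fin h_one)
  simp only [← lintegral_eq_sum_add_lintegral_killedOp_iterate hinv hC hg, add_zero] at h_lim
  exact tendsto_nhds_unique h_lim tendsto_const_nhds

end Invariant

section Drift

variable {P : Kernel 𝓧 𝓧} [IsMarkovKernel P] {C : Set 𝓧} {π : Measure 𝓧} {W : 𝓧 → ℝ≥0∞}
  {c : ℝ≥0∞}

theorem nat_mul_killedOp_iterate_one_le (hW : ∀ x ∉ C, ∫⁻ y, W y ∂P x + c ≤ W x) (n : ℕ)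
    (x : 𝓧) : n * c * (killedOp P C)^[n] 1 x ≤ W x := by
  induction n generalizing x with
  | zero => simp
  | succ n ih =>
    rw [Function.iterate_succ_apply']
    by_cases hx : x ∈ C
    · simp [killedOp, hx]
    set p := ∫⁻ y, (killedOp P C)^[n] 1 y ∂P x
    have hp : p ≤ 1 := (lintegral_mono (killedOp.iterate_one_le_one n)).trans_eq (by simp)
    rw [killedOp, Set.indicator_of_mem hx]
    calc ((n + 1 : ℕ) : ℝ≥0∞) * c * p = n * c * p + c * p := by push_cast; ring
      _ ≤ ∫⁻ y, n * c * (killedOp P C)^[n] 1 y ∂P x + c * 1 :=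
          add_le_add (lintegral_const_mul_le _ _) (by gcongr)
      _ ≤ ∫⁻ y, W y ∂P x + c := by rw [mul_one]; gcongr with y; exact ih y
      _ ≤ W x := hW x hx

theorem tendsto_killedOp_iterate_one (hW : ∀ x ∉ C, ∫⁻ y, W y ∂P x + c ≤ W x) (hc : c ≠ 0)
    {x : 𝓧} (hWx : W x ≠ ∞) : Tendsto (fun n => (killedOp P C)^[n] 1 x) atTop (𝓝 0) := by
  rw [ENNReal.tendsto_atTop_zero]
  intro ε hε
  obtain ⟨N, hN⟩ := ENNReal.exists_nat_mul_gt (mul_ne_zero hc hε.ne') hWx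
  refine ⟨N, fun n hn => le_of_not_gt fun hlt => ?_⟩
  refine (nat_mul_killedOp_iterate_one_le hW n x).not_gt (hN.trans_le ?_)
  rw [← mul_assoc]
  gcongr

theorem tendsto_lintegral_killedOp_iterate_one [IsFiniteMeasure π] (hC : MeasurableSet C)
    (hW : ∀ x ∉ C, ∫⁻ y, W y ∂P x + c ≤ W x) (hc : c ≠ 0) (hW_top : ∀ x, W x ≠ ∞) :
    Tendsto (fun n => ∫⁻ x, (killedOp P C)^[n] 1 x ∂π) atTop (𝓝 0) := by
  simpa using tendsto_lintegral_of_dominated_convergence (f := fun _ => 0) 1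
    (killedOp.measurable_iterate hC measurable_one)
    (fun n => ae_of_all _ (killedOp.iterate_one_le_one n)) (by simp)
    (ae_of_all _ fun x => tendsto_killedOp_iterate_one hW hc (hW_top x))

theorem lintegral_min_add_indicator_le_of_drift {h : 𝓧 → ℝ≥0∞} {b : ℝ≥0∞}
    (hdrift : ∀ x, ∫⁻ y, W y ∂P x + h x ≤ W x + b) (M : ℝ≥0∞) (x : 𝓧) :
    ∫⁻ y, min (W y) M ∂P x + {x | W x ≤ M}.indicator h x ≤ min (W x) M + b := by
  by_cases hx : W x ≤ M
  · rw [Set.indicator_of_mem (show x ∈ {x | W x ≤ M} from hx), min_eq_left hx]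
    exact (add_le_add (lintegral_mono fun y => min_le_left _ _) le_rfl).trans (hdrift x)
  · rw [Set.indicator_of_notMem (show x ∉ {x | W x ≤ M} from hx), add_zero,
      min_eq_right (not_le.1 hx).le]
    exact ((lintegral_mono fun y => min_le_right _ _).trans_eq (by simp)).trans le_self_add

theorem setLIntegral_le_of_drift [IsFiniteMeasure π] (hinv : π.bind (fun x => P x) = π)
    {h : 𝓧 → ℝ≥0∞} {b : ℝ≥0∞} (hW : Measurable W) (hdrift : ∀ x, ∫⁻ y, W y ∂P x + h x ≤ W x + b)
    {M : ℝ≥0∞} (hM : M ≠ ∞) : ∫⁻ x in {x | W x ≤ M}, h x ∂π ≤ b * π Set.univ := by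
  have hW_M : Measurable fun x => min (W x) M := hW.min measurable_const
  have h_fin : ∫⁻ x, min (W x) M ∂π ≠ ∞ := ne_top_of_le_ne_top
    (by simpa using ENNReal.mul_ne_top hM (measure_ne_top π Set.univ))
    (lintegral_mono fun x => min_le_right _ _ : _ ≤ ∫⁻ _, M ∂π)
  have h_int := lintegral_mono (μ := π) (lintegral_min_add_indicator_le_of_drift hdrift M)
  rw [lintegral_add_left hW_M.lintegral_kernel, lintegral_lintegral_kernel_of_bind_eq hinv hW_M,
    lintegral_indicator (measurableSet_le hW measurable_const),
    lintegral_add_right _ measurable_const, lintegral_const] at h_int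
  exact ENNReal.le_of_add_le_add_left h_fin h_int

theorem lintegral_le_of_drift [IsFiniteMeasure π] (hinv : π.bind (fun x => P x) = π)
    {h : 𝓧 → ℝ≥0∞} {b : ℝ≥0∞} (hW : Measurable W) (hW_top : ∀ x, W x ≠ ∞)
    (hdrift : ∀ x, ∫⁻ y, W y ∂P x + h x ≤ W x + b) : ∫⁻ x, h x ∂π ≤ b * π Set.univ := by
  have h_exhaust : (⋃ M : ℕ, {x | W x ≤ M}) = Set.univ :=
    Set.iUnion_eq_univ_iff.2 fun x => (ENNReal.exists_nat_gt (hW_top x)).imp fun _ => le_of_lt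
  have h_mono : Monotone fun M : ℕ => {x | W x ≤ M} := fun M N hMN x (hx : W x ≤ M) =>
    show W x ≤ N from hx.trans (by exact_mod_cast hMN)
  calc ∫⁻ x, h x ∂π = ⨆ M : ℕ, ∫⁻ x in {x | W x ≤ M}, h x ∂π := by
        rw [← setLIntegral_iUnion_of_directed h h_mono.directed_le, h_exhaust,
          Measure.restrict_univ]
    _ ≤ b * π Set.univ :=
        iSup_le fun M => setLIntegral_le_of_drift hinv hW hdrift (ENNReal.natCast_ne_top M)

theorem integrable_of_drift [IsProbabilityMeasure π] (hinv : π.bind (fun x => P x) = π)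
    {V f : 𝓧 → ℝ} (hV : Measurable V) (hf : Measurable f) (hf0 : ∀ x, 0 ≤ f x) {δ K : ℝ}
    (hδ : 0 < δ) (hdrift : ∀ x, ∫⁻ y, ENNReal.ofReal (V y) ∂P x + ENNReal.ofReal (δ * f x)
      ≤ ENNReal.ofReal (V x) + ENNReal.ofReal K) :
    Integrable f π := by
  have h := lintegral_le_of_drift hinv hV.ennreal_ofReal (fun _ => ENNReal.ofReal_ne_top) hdrift
  simp_rw [ENNReal.ofReal_mul hδ.le] at h
  rw [lintegral_const_mul _ hf.ennreal_ofReal, measure_univ, mul_one] at h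
  refine ⟨hf.aestronglyMeasurable, (hasFiniteIntegral_iff_ofReal (ae_of_all _ hf0)).2 ?_⟩
  exact ENNReal.lt_top_of_mul_ne_top_right (h.trans_lt ENNReal.ofReal_lt_top).ne
    (ENNReal.ofReal_pos.2 hδ).ne'

end Drift

/-- `μ` is the law of the path of the chain with kernel `P` started at `x`. -/
structure IsChainLaw (P : Kernel 𝓧 𝓧) (x : 𝓧) (μ : Measure (ℕ → 𝓧)) : Prop where
  isProbabilityMeasure : IsProbabilityMeasure μ
  start : μ {ω | ω 0 = x} = 1
  markov : ∀ (n : ℕ) (g : 𝓧 → ℝ≥0∞), Measurable g → ∀ s : Set (ℕ → 𝓧),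
    MeasurableSet[MeasurableSpace.comap (fun ω (i : Fin (n+1)) => ω i) inferInstance] s →
    ∫⁻ ω in s, g (ω (n+1)) ∂μ = ∫⁻ ω in s, (∫⁻ y, g y ∂(P (ω n))) ∂μ

section PathSpace

variable {C : Set 𝓧}

theorem measurableSet_comap_notHitBefore (hC : MeasurableSet C) (k : ℕ) :
    MeasurableSet[MeasurableSpace.comap (fun ω (i : Fin (k+1)) => ω i) inferInstance]
      (notHitBefore C (k + 1)) := by
  have h_eq : notHitBefore C (k + 1) = (fun ω (i : Fin (k+1)) => ω i) ⁻¹'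
      ⋂ (i : Fin (k+1)) (_ : 1 ≤ (i : ℕ)), (fun v => v i) ⁻¹' Cᶜ := by
    ext ω
    simp only [notHitBefore, Set.mem_ofPred_eq, Set.mem_preimage, Set.mem_iInter,
      Set.mem_compl_iff]
    exact ⟨fun ⟨_, h⟩ i hi => h i hi i.isLt, fun h => ⟨by omega, fun j h1 h2 => h ⟨j, h2⟩ h1⟩⟩
  rw [h_eq]
  refine MeasurableSet.preimage ?_ (comap_measurable _)
  exact .iInter fun i => .iInter fun _ => measurable_pi_apply i hC.compl

theorem measurableSet_notHitBefore (hC : MeasurableSet C) :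
    ∀ k, MeasurableSet (notHitBefore C k)
  | 0 => notHitBefore_zero (C := C) ▸ .empty
  | k + 1 => (measurable_pi_lambda (fun ω (i : Fin (k+1)) => ω i)
      fun _ => measurable_pi_apply _).comap_le _ (measurableSet_comap_notHitBefore hC k)
end PathSpace

namespace IsChainLaw

variable {P : Kernel 𝓧 𝓧} {C : Set 𝓧} {x : 𝓧} {μ : Measure (ℕ → 𝓧)}

theorem lintegral_eval_zero (hμ : IsChainLaw P x μ) {h : 𝓧 → ℝ≥0∞} (hh : Measurable h) :
    ∫⁻ ω, h (ω 0) ∂μ = h x := by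
  have := hμ.isProbabilityMeasure
  have h_meas : MeasurableSet {ω : ℕ → 𝓧 | h (ω 0) = h x} :=
    (hh.comp (measurable_pi_apply 0)) (measurableSet_singleton _)
  have h_ae : ∀ᵐ ω ∂μ, h (ω 0) = h x := by
    rw [ae_iff_measure_eq h_meas.nullMeasurableSet, measure_univ]
    exact le_antisymm prob_le_one (hμ.start ▸ measure_mono fun ω (hω : ω 0 = x) => by simp [hω])
  simp [lintegral_congr_ae h_ae]

theorem setLIntegral_notHitBefore (hμ : IsChainLaw P x μ) (hC : MeasurableSet C) (k : ℕ)
    {g : 𝓧 → ℝ≥0∞} (hg : Measurable g) :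
    ∫⁻ ω in notHitBefore C (k + 1), g (ω (k + 1)) ∂μ = ∫⁻ y, (killedOp P C)^[k] g y ∂P x := by
  induction k generalizing g with
  | zero =>
    have h := hμ.markov 0 g hg Set.univ MeasurableSet.univ
    rw [Measure.restrict_univ] at h
    rw [notHitBefore_one, Measure.restrict_univ, h, hμ.lintegral_eval_zero hg.lintegral_kernel]
    rfl
  | succ k ih =>
    have h_killed : ∀ ω : ℕ → 𝓧, killedOp P C g (ω (k + 1))
        = ((fun ω => ω (k + 1)) ⁻¹' Cᶜ).indicator (fun ω => ∫⁻ y, g y ∂P (ω (k + 1))) ω :=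
      fun ω => (Set.indicator_comp_right (fun ω : ℕ → 𝓧 => ω (k + 1))).symm
    rw [hμ.markov (k + 1) g hg _ (measurableSet_comap_notHitBefore hC (k + 1)),
      Function.iterate_succ_apply, ← ih (killedOp.measurable hC hg), notHitBefore_add_two,
      Set.inter_comm, ← setLIntegral_indicator (measurable_pi_apply _ hC.compl)]
    exact (setLIntegral_congr_fun (measurableSet_notHitBefore hC _)
      fun ω _ => h_killed ω).symm

theorem tsum_setLIntegral_notHitBefore (hμ : IsChainLaw P x μ) (hC : MeasurableSet C)
    {g : 𝓧 → ℝ≥0∞} (hg : Measurable g) :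
    ∑' k, ∫⁻ ω in notHitBefore C k, g (ω k) ∂μ = excursionSum P C g x := by
  rw [tsum_eq_zero_add' ENNReal.summable, notHitBefore_zero, Measure.restrict_empty,
    lintegral_zero_measure, zero_add]
  exact tsum_congr fun k => hμ.setLIntegral_notHitBefore hC k hg

theorem integral_tsum_indicator_notHitBefore (hμ : IsChainLaw P x μ) (hC : MeasurableSet C)
    {φ : 𝓧 → ℝ} (hφ : Measurable φ) (h_fin : excursionSum P C (fun y => ‖φ y‖ₑ) x ≠ ∞) :
    ∫ ω, ∑' k, (notHitBefore C k).indicator (fun ω => φ (ω k)) ω ∂μ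
      = (excursionSum P C (fun y => ENNReal.ofReal (φ y)) x).toReal
        - (excursionSum P C (fun y => ENNReal.ofReal (-φ y)) x).toReal := by
  have h_tsum {G : ℝ → ℝ≥0∞} (hG : Measurable G) (hG0 : G 0 = 0) :
      ∑' k, ∫⁻ ω, G ((notHitBefore C k).indicator (fun ω => φ (ω k)) ω) ∂μ
        = excursionSum P C (fun y => G (φ y)) x := by
    simp_rw [lintegral_comp_indicator (measurableSet_notHitBefore hC _) hG0]
    exact hμ.tsum_setLIntegral_notHitBefore hC (hG.comp hφ)
  have h_pos := h_tsum ENNReal.measurable_ofReal ENNReal.ofReal_zero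
  have h_neg := h_tsum (G := fun r => ENNReal.ofReal (-r)) (by fun_prop) (by simp)
  have h_norm := h_tsum measurable_enorm enorm_zero
  have h_meas (k : ℕ) : AEStronglyMeasurable
      (fun ω => (notHitBefore C k).indicator (fun ω => φ (ω k)) ω) μ :=
    ((hφ.comp (measurable_pi_apply k)).indicator
      (measurableSet_notHitBefore hC k)).aestronglyMeasurable
  rw [integral_tsum_eq_toReal_sub_toReal h_meas (h_norm ▸ h_fin), h_pos, h_neg]

end IsChainLaw

theorem setIntegral_integral_tsum_indicator_notHitBefore {P : Kernel 𝓧 𝓧} {C : Set 𝓧}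
    {π : Measure 𝓧} {Pr : 𝓧 → Measure (ℕ → 𝓧)} (hinv : π.bind (fun x => P x) = π)
    (hC : MeasurableSet C) (hPr : ∀ x, IsChainLaw P x (Pr x))
    (h_one : Tendsto (fun n => ∫⁻ x, (killedOp P C)^[n] 1 x ∂π) atTop (𝓝 0))
    {φ : 𝓧 → ℝ} (hφm : Measurable φ) (hφ : Integrable φ π) :
    ∫ x in C, ∫ ω, ∑' k, (notHitBefore C k).indicator (fun ω => φ (ω k)) ω ∂Pr x ∂π
      = ∫ y, φ y ∂π := by
  have h_exc {G : ℝ → ℝ≥0∞} (hG : Measurable G) (hG_fin : ∫⁻ y, G (φ y) ∂π ≠ ∞) :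
      ∫⁻ x in C, excursionSum P C (fun y => G (φ y)) x ∂π = ∫⁻ y, G (φ y) ∂π :=
    setLIntegral_excursionSum hinv hC (hG.comp hφm) hG_fin h_one
  have h_meas {G : ℝ → ℝ≥0∞} (hG : Measurable G) :
      AEMeasurable (excursionSum P C fun y => G (φ y)) (π.restrict C) :=
    (measurable_excursionSum hC (hG.comp hφm)).aemeasurable
  have h_pos_fin := hφ.lintegral_lt_top.ne
  have h_neg_fin := hφ.neg.lintegral_lt_top.ne
  have h_norm_fin : ∫⁻ y, ‖φ y‖ₑ ∂π ≠ ∞ := hφ.2.ne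
  have h_ae : ∀ᵐ x ∂π.restrict C, excursionSum P C (fun y => ‖φ y‖ₑ) x ≠ ∞ :=
    (ae_lt_top' (h_meas measurable_enorm) ((h_exc measurable_enorm h_norm_fin).trans_ne
      h_norm_fin)).mono fun _ => LT.lt.ne
  rw [integral_eq_toReal_sub_toReal_of_ae_eq (h_meas ENNReal.measurable_ofReal)
    (h_meas (G := fun r => ENNReal.ofReal (-r)) (by fun_prop))
    ((h_exc ENNReal.measurable_ofReal h_pos_fin).trans_ne h_pos_fin)
    ((h_exc (G := fun r => ENNReal.ofReal (-r)) (by fun_prop) h_neg_fin).trans_ne h_neg_fin)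
    (h_ae.mono fun x hx => (hPr x).integral_tsum_indicator_notHitBefore hC hφm hx),
    h_exc ENNReal.measurable_ofReal h_pos_fin,
    h_exc (G := fun r => ENNReal.ofReal (-r)) (by fun_prop) h_neg_fin,
    integral_eq_lintegral_pos_part_sub_lintegral_neg_part hφ]
end

theorem invariant_measure_representation_general
    {𝓧 : Type*} [MeasurableSpace 𝓧]
    (P : Kernel 𝓧 𝓧) [IsMarkovKernel P]
    (π : Measure 𝓧) [IsProbabilityMeasure π]
    (hinv : π.bind (fun x => P x) = π)
    (Pr : 𝓧 → Measure (ℕ → 𝓧)) (hprob : ∀ x, IsProbabilityMeasure (Pr x))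
    (hstart : ∀ x, (Pr x) {ω | ω 0 = x} = 1)
    (hMarkov : ∀ (x : 𝓧) (n : ℕ) (g : 𝓧 → ENNReal), Measurable g →
      ∀ s : Set (ℕ → 𝓧),
        MeasurableSet[MeasurableSpace.comap (fun ω (i : Fin (n+1)) => ω i) inferInstance] s →
        ∫⁻ ω in s, g (ω (n+1)) ∂(Pr x) = ∫⁻ ω in s, (∫⁻ y, g y ∂(P (ω n))) ∂(Pr x))
    (V f : 𝓧 → ℝ) (hV : Measurable V) (hf : Measurable f)
    (hV1 : ∀ x, 1 ≤ V x)
    (γ K R : ℝ) (hγ : γ ∈ Set.Ioo (0:ℝ) 1) (hR : K / (1 - γ) < R)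
    (hVint : ∀ x, Integrable V (P x))
    (hdrift : ∀ x, (∫ y, V y ∂(P x)) - V x ≤ -(1 - γ) * f x + K)
    (C : Set 𝓧) (hC : C = {x | f x ≤ R})
    (φ : 𝓧 → ℝ) (hφm : Measurable φ) (hφ : ∀ z, |φ z| ≤ f z) :
    Integrable φ π ∧
      ∫ x in C, (∫ ω, (∑' k : ℕ,
          Set.indicator {ω' : ℕ → 𝓧 | 1 ≤ k ∧ ∀ j, 1 ≤ j → j < k → ω' j ∉ C}
            (fun ω' => φ (ω' k)) ω) ∂(Pr x)) ∂π
        = ∫ z, φ z ∂π := by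
  have h1γ : 0 < 1 - γ := sub_pos.2 hγ.2
  have hf0 (x : 𝓧) : 0 ≤ f x := (abs_nonneg _).trans (hφ x)
  have hV0 (x : 𝓧) : 0 ≤ V x := zero_le_one.trans (hV1 x)
  have hC_meas : MeasurableSet C := hC ▸ measurableSet_le hf measurable_const
  have h_drift (x : 𝓧) : ∫⁻ y, ENNReal.ofReal (V y) ∂P x + ENNReal.ofReal ((1 - γ) * f x)
      ≤ ENNReal.ofReal (V x) + ENNReal.ofReal K :=
    (lintegral_ofReal_add_ofReal_le hV0 (hVint x) (mul_nonneg h1γ.le (hf0 x))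
      (by linarith [hdrift x])).trans ENNReal.ofReal_add_le
  have h_gap : 0 < (1 - γ) * R - K := by rw [div_lt_iff₀ h1γ] at hR; linarith
  have h_drift_C (x : 𝓧) (hx : x ∉ C) : ∫⁻ y, ENNReal.ofReal (V y) ∂P x
      + ENNReal.ofReal ((1 - γ) * R - K) ≤ ENNReal.ofReal (V x) := by
    have hfx : R < f x := by simpa [hC] using hx
    exact lintegral_ofReal_add_ofReal_le hV0 (hVint x) h_gap.le (by nlinarith [hdrift x])
  have hφ_int : Integrable φ π := (integrable_of_drift hinv hV hf hf0 h1γ h_drift).mono'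
    hφm.aestronglyMeasurable (ae_of_all _ hφ)
  have h_one := tendsto_lintegral_killedOp_iterate_one (π := π) hC_meas h_drift_C
    (ENNReal.ofReal_pos.2 h_gap).ne' fun _ => ENNReal.ofReal_ne_top
  exact ⟨hφ_int, setIntegral_integral_tsum_indicator_notHitBefore hinv hC_meas
    (fun x => ⟨hprob x, hstart x, hMarkov x⟩) h_one hφm hφ_int⟩

/-- Representation of the invariant measure: if `P` has unique invariant probability
measure `π`, the drift condition holds, `C = {f ≤ R}` with `R > K/(1-γ)`, and
`∫_C V dπ < ∞`, then every measurable `φ` with `|φ| ≤ f` is `π`-integrable and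
`∫_C E[Σ_{k=1}^{τ_C} φ(X_k) | X_0 = x] π(dx) = ∫ φ dπ`. -/
theorem invariant_measure_representation
    {𝓧 : Type*} [MeasurableSpace 𝓧]
    (P : Kernel 𝓧 𝓧) [IsMarkovKernel P]
    (π : Measure 𝓧) [IsProbabilityMeasure π]
    (hinv : π.bind (fun x => P x) = π)
    (huniq : ∀ ν : Measure 𝓧, IsProbabilityMeasure ν → ν.bind (fun x => P x) = ν → ν = π)
    (Pr : 𝓧 → Measure (ℕ → 𝓧)) (hprob : ∀ x, IsProbabilityMeasure (Pr x))
    (hstart : ∀ x, (Pr x) {ω | ω 0 = x} = 1)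
    (hMarkov : ∀ (x : 𝓧) (n : ℕ) (g : 𝓧 → ENNReal), Measurable g →
      ∀ s : Set (ℕ → 𝓧),
        MeasurableSet[MeasurableSpace.comap (fun ω (i : Fin (n+1)) => ω i) inferInstance] s →
        ∫⁻ ω in s, g (ω (n+1)) ∂(Pr x) = ∫⁻ ω in s, (∫⁻ y, g y ∂(P (ω n))) ∂(Pr x))
    (V f : 𝓧 → ℝ) (hV : Measurable V) (hf : Measurable f)
    (hV1 : ∀ x, 1 ≤ V x) (hf1 : ∀ x, 1 ≤ f x)
    (γ K R : ℝ) (hγ : γ ∈ Set.Ioo (0:ℝ) 1) (hK : 0 < K) (hR : K / (1 - γ) < R)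
    (hVint : ∀ x, Integrable V (P x))
    (hdrift : ∀ x, (∫ y, V y ∂(P x)) - V x ≤ -(1 - γ) * f x + K)
    (C : Set 𝓧) (hC : C = {x | f x ≤ R})
    (hVC : IntegrableOn V C π)
    (φ : 𝓧 → ℝ) (hφm : Measurable φ) (hφ : ∀ z, |φ z| ≤ f z) :
    Integrable φ π ∧
      ∫ x in C, (∫ ω, (∑' k : ℕ,
          Set.indicator {ω' : ℕ → 𝓧 | 1 ≤ k ∧ ∀ j, 1 ≤ j → j < k → ω' j ∉ C}
            (fun ω' => φ (ω' k)) ω) ∂(Pr x)) ∂π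
        = ∫ z, φ z ∂π :=
  invariant_measure_representation_general P π hinv Pr hprob hstart hMarkov V f hV hf hV1 γ K R hγ
    hR hVint hdrift C hC φ hφm hφ
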